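/- Let n ≥ 2, 2 ≤ γ < n, 2 ≤ δ < n, a, b ≥ 0 and p, q ≥ 1 with pq > 1. Suppose u, v ∈ C¹(ℝⁿ) are nonnegative functions solving the integral system (IE) with parameters (γ, δ, a, b, p, q), and suppose that (γ+a+p(δ+b))/(pq−1) > n−γ or (δ+b+q(γ+a))/(pq−1) > n−δ. Then u ≡ 0 and v ≡ 0 on ℝⁿ. -/

import Mathlib

open MeasureTheory Metric Set

/-- Spherical average of `w` over the sphere of radius `r` centered at the origin,
with respect to the `(n-1)`-dimensional (Hausdorff) surface measure. -/
noncomputable def sphAvg (n : ℕ) (w : EuclideanSpace ℝ (Fin n) → ℝ) (r : ℝ) : ℝ :=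
  ⨍ x in sphere (0 : EuclideanSpace ℝ (Fin n)) r, w x ∂(μH[(n : ℝ) - 1])
/-- The Riesz potential constant `R_{s,n}`. -/
noncomputable def Rconst (n : ℕ) (s : ℝ) : ℝ :=
  Real.Gamma (((n : ℝ) - s) / 2) / (Real.pi ^ ((n : ℝ) / 2) * 2 ^ s * Real.Gamma (s / 2))
/-- The integral system (IE) with parameters `(γ, δ, a, b, p, q)`:
`u(x) = R_{γ,n} ∫ |y|^a v(y)^p |x-y|^{γ-n} dy`,
`v(x) = R_{δ,n} ∫ |y|^b u(y)^q |x-y|^{δ-n} dy`, all integrals being finite. -/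
def SolvesIE (n : ℕ) (γ δ a b p q : ℝ)
    (u v : EuclideanSpace ℝ (Fin n) → ℝ) : Prop :=
  (∀ x, Integrable (fun y => ‖y‖ ^ a * v y ^ p * ‖x - y‖ ^ (γ - (n : ℝ)))) ∧
  (∀ x, Integrable (fun y => ‖y‖ ^ b * u y ^ q * ‖x - y‖ ^ (δ - (n : ℝ)))) ∧
  (∀ x, u x = Rconst n γ * ∫ y, ‖y‖ ^ a * v y ^ p * ‖x - y‖ ^ (γ - (n : ℝ))) ∧
  (∀ x, v x = Rconst n δ * ∫ y, ‖y‖ ^ b * u y ^ q * ‖x - y‖ ^ (δ - (n : ℝ)))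

namespace IEAux

variable {n : ℕ}

lemma rpow_lower {y R t : ℝ} (hR : 0 < R) (h1 : R/4 ≤ y) (h2 : y ≤ R) :
    (4:ℝ)^(-|t|) * R^t ≤ y^t := by
  have hy : 0 < y := lt_of_lt_of_le (by linarith) h1
  rcases le_or_gt 0 t with ht | ht
  · rw [abs_of_nonneg ht]
    calc (4:ℝ)^(-t) * R^t = (R/4)^t := by
          rw [Real.div_rpow hR.le (by norm_num), Real.rpow_neg (by norm_num)]
          ring
      _ ≤ y^t := Real.rpow_le_rpow (by linarith) h1 ht
  · rw [abs_of_neg ht]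
    have h4 : (4:ℝ)^(-(-t)) ≤ 1 := by
      rw [neg_neg]
      exact Real.rpow_le_one_of_one_le_of_nonpos (by norm_num) ht.le
    have hRt : 0 < R^t := Real.rpow_pos_of_pos hR t
    calc (4:ℝ)^(-(-t)) * R^t ≤ 1 * R^t := by nlinarith
      _ = R^t := one_mul _
      _ ≤ y^t := Real.rpow_le_rpow_of_nonpos hy h2 ht.le

variable {n : ℕ}

lemma integral_ge_set (hn : 1 ≤ n) (f : EuclideanSpace ℝ (Fin n) → ℝ) (hf : Integrable f)
    (h0 : ∀ y, 0 ≤ f y) (S : Set (EuclideanSpace ℝ (Fin n))) (hS : MeasurableSet S)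
    (hfin : volume S ≠ ⊤) (x : EuclideanSpace ℝ (Fin n)) (c : ℝ)
    (hcf : ∀ y ∈ S, y ≠ x → c ≤ f y) :
    c * (volume S).toReal ≤ ∫ y, f y := by
  haveI : Nonempty (Fin n) := ⟨⟨0, hn⟩⟩
  haveI : Nontrivial (EuclideanSpace ℝ (Fin n)) := inferInstance
  have h1 : volume (S \ {x}) = volume S := measure_diff_null (measure_singleton x)
  have h2 : c * (volume (S \ {x})).toReal ≤ ∫ y in S \ {x}, f y :=
    setIntegral_ge_of_const_le_real (hS.diff (measurableSet_singleton x))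
      (by rw [h1]; exact hfin) (fun y hy => hcf y hy.1 hy.2) hf.integrableOn
  rw [h1] at h2
  exact h2.trans (setIntegral_le_integral hf (ae_of_all _ h0))

/-- Lower bound predicate: `C‖x‖^e ≤ w x` for `‖x‖ ≥ R`. -/
def LB (w : EuclideanSpace ℝ (Fin n) → ℝ) (e : ℝ) : Prop :=
  ∃ R C : ℝ, 1 ≤ R ∧ 0 < C ∧ ∀ x : EuclideanSpace ℝ (Fin n), R ≤ ‖x‖ → C * ‖x‖ ^ e ≤ w x

lemma LB_step (hn : 1 ≤ n) (s c₀ m K : ℝ) (hs : s ≤ n) (hc₀ : 0 ≤ c₀) (hm : 0 < m)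
    (hK : 0 < K) (w g : EuclideanSpace ℝ (Fin n) → ℝ) (hw0 : ∀ y, 0 ≤ w y)
    (hInt : ∀ x, Integrable fun y => ‖y‖^c₀ * w y^m * ‖x-y‖^(s-(n:ℝ)))
    (hg : ∀ x, g x = K * ∫ y, ‖y‖^c₀ * w y^m * ‖x-y‖^(s-(n:ℝ)))
    {e : ℝ} (h : LB w e) : LB g (s + c₀ + m*e) := by
  obtain ⟨R₀, C, hR₀, hC, hLB⟩ := h
  set v₁ := (volume (ball (0:EuclideanSpace ℝ (Fin n)) 1)).toReal with hv₁def
  have hv₁ : 0 < v₁ :=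
    ENNReal.toReal_pos (measure_ball_pos _ _ one_pos).ne' measure_ball_lt_top.ne
  refine ⟨4*R₀, K * ((4:ℝ)^(-|c₀|) * (C^m * (4:ℝ)^(-|e*m|)) * (4:ℝ)^(-(n:ℝ)) * v₁),
    by linarith, by positivity, fun x hx => ?_⟩
  set R := ‖x‖ with hRdef
  have hR0 : 0 < R := by have := norm_nonneg x; rw [← hRdef] at *; linarith
  have hR1 : (1:ℝ) ≤ R := by linarith
  set S : Set (EuclideanSpace ℝ (Fin n)) := closedBall ((2:ℝ)⁻¹ • x) (R/4) with hSdef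
  have hcnorm : ‖(2:ℝ)⁻¹ • x‖ = R/2 := by
    rw [norm_smul, norm_inv, Real.norm_ofNat, ← hRdef]; ring
  -- pointwise bounds on S
  have hyS : ∀ y ∈ S, R/4 ≤ ‖y‖ ∧ ‖y‖ ≤ R ∧ ‖x - y‖ ≤ R ∧ R/4 ≤ ‖x - y‖ := by
    intro y hy
    rw [hSdef, mem_closedBall, dist_eq_norm] at hy
    have t1 : ‖(2:ℝ)⁻¹ • x‖ ≤ ‖(2:ℝ)⁻¹ • x - y‖ + ‖y‖ := by
      simpa using norm_add_le ((2:ℝ)⁻¹ • x - y) y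
    have t1' : ‖(2:ℝ)⁻¹ • x - y‖ = ‖y - (2:ℝ)⁻¹ • x‖ := norm_sub_rev _ _
    have t2 : ‖y‖ ≤ ‖y - (2:ℝ)⁻¹ • x‖ + ‖(2:ℝ)⁻¹ • x‖ := by
      simpa using norm_add_le (y - (2:ℝ)⁻¹ • x) ((2:ℝ)⁻¹ • x)
    have hxc : ‖x - (2:ℝ)⁻¹ • x‖ = R/2 := by
      have : x - (2:ℝ)⁻¹ • x = (2:ℝ)⁻¹ • x := by
        rw [sub_eq_iff_eq_add, ← add_smul]; norm_num
      rw [this, hcnorm]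
    have t3 : ‖x - y‖ ≤ ‖x - (2:ℝ)⁻¹ • x‖ + ‖(2:ℝ)⁻¹ • x - y‖ := by
      simpa using norm_add_le (x - (2:ℝ)⁻¹ • x) ((2:ℝ)⁻¹ • x - y)
    have t4 : ‖x - (2:ℝ)⁻¹ • x‖ ≤ ‖x - y‖ + ‖y - (2:ℝ)⁻¹ • x‖ := by
      simpa using norm_add_le (x - y) (y - (2:ℝ)⁻¹ • x)
    rw [t1'] at t1
    rw [hcnorm] at t1 t2
    rw [hxc] at t3 t4
    rw [t1'] at t3
    constructor; · linarith
    constructor; · linarith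
    constructor; · linarith
    · linarith
  have hf0 : ∀ y, 0 ≤ ‖y‖^c₀ * w y^m * ‖x-y‖^(s-(n:ℝ)) := by
    intro y
    have := hw0 y
    positivity
  set cpt : ℝ := ((4:ℝ)^(-|c₀|) * R^c₀) * (C^m * ((4:ℝ)^(-|e*m|) * R^(e*m))) * (R^(s-(n:ℝ)))
    with hcptdef
  have hpoint : ∀ y ∈ S, y ≠ x → cpt ≤ ‖y‖^c₀ * w y^m * ‖x-y‖^(s-(n:ℝ)) := by
    intro y hy _
    obtain ⟨h1, h2, h3, h4⟩ := hyS y hy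
    have hxy0 : 0 < ‖x - y‖ := by linarith
    have hterm1 : (4:ℝ)^(-|c₀|) * R^c₀ ≤ ‖y‖^c₀ := rpow_lower hR0 h1 h2
    have hyR₀ : R₀ ≤ ‖y‖ := by linarith
    have hwy : C * ‖y‖^e ≤ w y := hLB y hyR₀
    have hwy0 : 0 ≤ C * ‖y‖^e := by positivity
    have hterm2 : C^m * ((4:ℝ)^(-|e*m|) * R^(e*m)) ≤ w y ^ m := by
      have hA : (C * ‖y‖^e)^m ≤ w y ^ m := Real.rpow_le_rpow hwy0 hwy hm.le
      have hB : (C * ‖y‖^e)^m = C^m * ‖y‖^(e*m) := by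
        rw [Real.mul_rpow hC.le (Real.rpow_nonneg (norm_nonneg y) e),
          ← Real.rpow_mul (norm_nonneg y)]
      have hD : (4:ℝ)^(-|e*m|) * R^(e*m) ≤ ‖y‖^(e*m) := rpow_lower hR0 h1 h2
      calc C^m * ((4:ℝ)^(-|e*m|) * R^(e*m)) ≤ C^m * ‖y‖^(e*m) := by
            have : (0:ℝ) ≤ C^m := Real.rpow_nonneg hC.le m
            nlinarith
        _ = (C * ‖y‖^e)^m := hB.symm
        _ ≤ w y ^ m := hA
    have hterm3 : R^(s-(n:ℝ)) ≤ ‖x-y‖^(s-(n:ℝ)) :=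
      Real.rpow_le_rpow_of_nonpos hxy0 h3 (by push_cast; linarith)
    have n1 : (0:ℝ) ≤ (4:ℝ)^(-|c₀|) * R^c₀ := by positivity
    have n2 : (0:ℝ) ≤ C^m * ((4:ℝ)^(-|e*m|) * R^(e*m)) := by positivity
    have n3 : (0:ℝ) ≤ R^(s-(n:ℝ)) := by positivity
    have n4 : (0:ℝ) ≤ ‖y‖^c₀ := by positivity
    have n5 : (0:ℝ) ≤ ‖y‖^c₀ * w y^m := mul_nonneg n4 (Real.rpow_nonneg (hw0 y) m)
    exact mul_le_mul (mul_le_mul hterm1 hterm2 n2 n4) hterm3 n3 n5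
  have hSm : volume S = ENNReal.ofReal ((R/4)^n) * volume (ball (0:EuclideanSpace ℝ (Fin n)) 1) := by
    rw [hSdef]
    have := Measure.addHaar_closedBall (volume : Measure (EuclideanSpace ℝ (Fin n)))
      ((2:ℝ)⁻¹ • x) (r := R/4) (by linarith)
    rwa [finrank_euclideanSpace_fin] at this
  have hSfin : volume S ≠ ⊤ := measure_closedBall_lt_top.ne
  have hStoReal : (volume S).toReal = (R/4)^n * v₁ := by
    rw [hSm, ENNReal.toReal_mul, ENNReal.toReal_ofReal (by positivity)]
  have hint := integral_ge_set hn _ (hInt x) hf0 S measurableSet_closedBall hSfin x cpt hpoint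
  rw [hStoReal] at hint
  rw [hg x]
  have hKle : K * (cpt * ((R/4)^n * v₁)) ≤ K * ∫ y, ‖y‖^c₀ * w y^m * ‖x-y‖^(s-(n:ℝ)) := by
    have := mul_le_mul_of_nonneg_left hint hK.le
    linarith [this]
  refine le_trans (le_of_eq ?_) hKle
  have e1 : ((R/4):ℝ)^(n:ℕ) = R^((n:ℝ)) * ((4:ℝ)^((n:ℝ)))⁻¹ := by
    rw [div_pow, ← Real.rpow_natCast R n, ← Real.rpow_natCast (4:ℝ) n, div_eq_mul_inv]
  have e2 : R^c₀ * R^(e*m) * R^(s-(n:ℝ)) * R^((n:ℝ)) = R^(s+c₀+m*e) := by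
    rw [← Real.rpow_add hR0, ← Real.rpow_add hR0, ← Real.rpow_add hR0]
    ring_nf
  have e3 : (4:ℝ)^(-(n:ℝ)) = ((4:ℝ)^((n:ℝ)))⁻¹ := Real.rpow_neg (by norm_num) _
  calc K * ((4:ℝ)^(-|c₀|) * (C^m * (4:ℝ)^(-|e*m|)) * (4:ℝ)^(-(n:ℝ)) * v₁) * ‖x‖^(s+c₀+m*e)
      = (K * ((4:ℝ)^(-|c₀|) * (C^m * (4:ℝ)^(-|e*m|)) * (4:ℝ)^(-(n:ℝ)) * v₁)) *
        (R^c₀ * R^(e*m) * R^(s-(n:ℝ)) * R^((n:ℝ))) := by rw [e2, ← hRdef]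
    _ = K * (cpt * ((R/4)^n * v₁)) := by rw [hcptdef, e1, e3]; ring

lemma LB_base (hn : 1 ≤ n) (s c₀ m K : ℝ) (hs : s ≤ n) (hc₀ : 0 ≤ c₀) (hm : 0 < m)
    (hK : 0 < K) (w g : EuclideanSpace ℝ (Fin n) → ℝ) (hw0 : ∀ y, 0 ≤ w y)
    (hwC : Continuous w)
    (hInt : ∀ x, Integrable fun y => ‖y‖^c₀ * w y^m * ‖x-y‖^(s-(n:ℝ)))
    (hg : ∀ x, g x = K * ∫ y, ‖y‖^c₀ * w y^m * ‖x-y‖^(s-(n:ℝ)))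
    (hpos : ∃ x₀, 0 < w x₀) : LB g (s - n) := by
  -- find a point y₁ ≠ 0 with w y₁ > 0
  have hy₁ : ∃ y₁ : EuclideanSpace ℝ (Fin n), y₁ ≠ 0 ∧ 0 < w y₁ := by
    obtain ⟨x₀, hx₀⟩ := hpos
    rcases eq_or_ne x₀ 0 with h0 | h0
    · subst h0
      have hcont := Metric.continuousAt_iff.mp (hwC.continuousAt (x := 0))
      obtain ⟨ρ, hρ, hball⟩ := hcont (w 0 / 2) (by linarith)
      haveI : Nonempty (Fin n) := ⟨⟨0, hn⟩⟩
      set y₁ : EuclideanSpace ℝ (Fin n) := (ρ/2) • EuclideanSpace.single (⟨0, hn⟩ : Fin n) (1:ℝ)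
        with hy₁def
      have hny : ‖y₁‖ = ρ/2 := by
        rw [hy₁def, norm_smul, EuclideanSpace.norm_single]
        simp [abs_of_pos hρ]
      refine ⟨y₁, by intro h; rw [h] at hny; simp at hny; linarith, ?_⟩
      have hd : dist y₁ 0 < ρ := by rw [dist_zero_right, hny]; linarith
      have := hball hd
      rw [Real.dist_eq, abs_lt] at this
      linarith [this.1]
    · exact ⟨x₀, h0, hx₀⟩
  obtain ⟨y₁, hy₁0, hwy₁⟩ := hy₁
  have hny₁ : 0 < ‖y₁‖ := norm_pos_iff.mpr hy₁0
  -- find radius r such that w ≥ w y₁ / 2 on closedBall y₁ r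
  have hcont := Metric.continuousAt_iff.mp (hwC.continuousAt (x := y₁))
  obtain ⟨δ₀, hδ₀, hball⟩ := hcont (w y₁ / 2) (by linarith)
  set r : ℝ := min (δ₀/2) (‖y₁‖/2) with hrdef
  have hr0 : 0 < r := lt_min (by linarith) (by linarith)
  have hr1 : r ≤ δ₀/2 := min_le_left _ _
  have hr2 : r ≤ ‖y₁‖/2 := min_le_right _ _
  have hSlb : ∀ y ∈ closedBall y₁ r, w y₁ / 2 ≤ w y ∧ ‖y₁‖/2 ≤ ‖y‖ ∧ ‖y‖ ≤ 2*‖y₁‖ := by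
    intro y hy
    rw [mem_closedBall] at hy
    have hwy : w y₁ / 2 ≤ w y := by
      have := hball (show dist y y₁ < δ₀ by linarith)
      rw [Real.dist_eq, abs_lt] at this
      linarith [this.1]
    have hdn : dist y y₁ = ‖y - y₁‖ := dist_eq_norm _ _
    have t1 : ‖y₁‖ ≤ ‖y₁ - y‖ + ‖y‖ := by simpa using norm_add_le (y₁ - y) y
    have t2 : ‖y‖ ≤ ‖y - y₁‖ + ‖y₁‖ := by simpa using norm_add_le (y - y₁) y₁
    have t3 : ‖y₁ - y‖ = ‖y - y₁‖ := norm_sub_rev _ _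
    rw [hdn] at hy
    rw [t3] at t1
    exact ⟨hwy, by linarith, by linarith⟩
  set S := closedBall y₁ r with hSdef
  have hSμ : 0 < (volume S).toReal := by
    refine ENNReal.toReal_pos ?_ measure_closedBall_lt_top.ne
    exact ((measure_ball_pos _ _ hr0).trans_le (measure_mono ball_subset_closedBall)).ne'
  refine ⟨max 1 (4*‖y₁‖),
    K * ((‖y₁‖/2)^c₀ * (w y₁/2)^m * (2:ℝ)^(s-(n:ℝ)) * (volume S).toReal),
    le_max_left _ _, by positivity, fun x hx => ?_⟩
  have hx1 : (1:ℝ) ≤ ‖x‖ := le_trans (le_max_left _ _) hx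
  have hx4 : 4*‖y₁‖ ≤ ‖x‖ := le_trans (le_max_right _ _) hx
  have hx0 : 0 < ‖x‖ := by linarith
  set cpt : ℝ := (‖y₁‖/2)^c₀ * (w y₁/2)^m * ((2:ℝ)^(s-(n:ℝ)) * ‖x‖^(s-(n:ℝ))) with hcptdef
  have hpoint : ∀ y ∈ S, y ≠ x → cpt ≤ ‖y‖^c₀ * w y^m * ‖x-y‖^(s-(n:ℝ)) := by
    intro y hy _
    obtain ⟨hwy, hylb, hyub⟩ := hSlb y hy
    have hxy_ub : ‖x - y‖ ≤ 2*‖x‖ := by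
      have := norm_sub_le x y
      linarith
    have hxy_lb : 0 < ‖x - y‖ := by
      have t2 : ‖x‖ ≤ ‖x - y‖ + ‖y‖ := by simpa using norm_add_le (x - y) y
      linarith
    have hterm1 : (‖y₁‖/2)^c₀ ≤ ‖y‖^c₀ := Real.rpow_le_rpow (by linarith) hylb hc₀
    have hterm2 : (w y₁/2)^m ≤ w y ^ m := Real.rpow_le_rpow (by linarith) hwy hm.le
    have hterm3 : (2:ℝ)^(s-(n:ℝ)) * ‖x‖^(s-(n:ℝ)) ≤ ‖x-y‖^(s-(n:ℝ)) := by
      have hnn : s - (n:ℝ) ≤ 0 := by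
        have : s ≤ (n:ℝ) := hs
        linarith
      have := Real.rpow_le_rpow_of_nonpos hxy_lb hxy_ub hnn
      rwa [Real.mul_rpow (by norm_num) hx0.le] at this
    have n2 : (0:ℝ) ≤ (w y₁/2)^m := Real.rpow_nonneg (by linarith) m
    have n3 : (0:ℝ) ≤ (2:ℝ)^(s-(n:ℝ)) * ‖x‖^(s-(n:ℝ)) := by positivity
    have n4 : (0:ℝ) ≤ ‖y‖^c₀ := Real.rpow_nonneg (norm_nonneg y) c₀
    have n5 : (0:ℝ) ≤ ‖y‖^c₀ * w y^m := mul_nonneg n4 (Real.rpow_nonneg (hw0 y) m)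
    exact mul_le_mul (mul_le_mul hterm1 hterm2 n2 n4) hterm3 n3 n5
  have hf0 : ∀ y, 0 ≤ ‖y‖^c₀ * w y^m * ‖x-y‖^(s-(n:ℝ)) := by
    intro y; have := hw0 y; positivity
  have hint := integral_ge_set hn _ (hInt x) hf0 S measurableSet_closedBall
    measure_closedBall_lt_top.ne x cpt hpoint
  rw [hg x]
  have hKle := mul_le_mul_of_nonneg_left hint hK.le
  refine le_trans (le_of_eq ?_) hKle
  rw [hcptdef]; ring

lemma LB_mono {w : EuclideanSpace ℝ (Fin n) → ℝ} {e e' : ℝ} (h : LB w e) (he : e' ≤ e) :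
    LB w e' := by
  obtain ⟨R, C, hR, hC, hLB⟩ := h
  refine ⟨R, C, hR, hC, fun x hx => ?_⟩
  have hx1 : (1:ℝ) ≤ ‖x‖ := hR.trans hx
  calc C * ‖x‖^e' ≤ C * ‖x‖^e := by
        have := Real.rpow_le_rpow_of_exponent_le hx1 he
        nlinarith
    _ ≤ w x := hLB x hx

lemma LB_absurd (hn : 1 ≤ n) (s c₀ m : ℝ) (hm : 0 < m)
    (w : EuclideanSpace ℝ (Fin n) → ℝ) (hw0 : ∀ y, 0 ≤ w y)
    (hI : Integrable fun y => ‖y‖^c₀ * w y^m * ‖(0:EuclideanSpace ℝ (Fin n))-y‖^(s-(n:ℝ)))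
    {e : ℝ} (h : LB w e) (he : 0 ≤ c₀ + m*e + s - n) : False := by
  obtain ⟨R, C, hR, hC, hLB⟩ := h
  haveI : Nonempty (Fin n) := ⟨⟨0, hn⟩⟩
  haveI : Nontrivial (EuclideanSpace ℝ (Fin n)) := inferInstance
  set f := fun y : EuclideanSpace ℝ (Fin n) => ‖y‖^c₀ * w y^m * ‖(0:EuclideanSpace ℝ (Fin n))-y‖^(s-(n:ℝ)) with hfdef
  have hCm : 0 < C^m := Real.rpow_pos_of_pos hC m
  have hlow : ∀ y : EuclideanSpace ℝ (Fin n), R ≤ ‖y‖ → C^m ≤ f y := by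
    intro y hy
    have hy0 : 0 < ‖y‖ := by linarith
    have hy1 : 1 ≤ ‖y‖ := by linarith
    have h0y : ‖(0:EuclideanSpace ℝ (Fin n)) - y‖ = ‖y‖ := by rw [zero_sub, norm_neg]
    have hwy : C * ‖y‖^e ≤ w y := hLB y hy
    have hwm : C^m * ‖y‖^(e*m) ≤ w y ^ m := by
      have hA : (C * ‖y‖^e)^m ≤ w y ^ m :=
        Real.rpow_le_rpow (by positivity) hwy hm.le
      rwa [Real.mul_rpow hC.le (Real.rpow_nonneg (norm_nonneg y) e),
        ← Real.rpow_mul (norm_nonneg y)] at hA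
    have key : C^m * ‖y‖^(c₀ + e*m + (s - (n:ℝ))) ≤ f y := by
      rw [hfdef]
      simp only [h0y]
      have expand : ‖y‖^(c₀ + e*m + (s-(n:ℝ))) = ‖y‖^c₀ * ‖y‖^(e*m) * ‖y‖^(s-(n:ℝ)) := by
        rw [← Real.rpow_add hy0, ← Real.rpow_add hy0]
      rw [expand]
      have n1 : (0:ℝ) ≤ ‖y‖^c₀ := Real.rpow_nonneg (norm_nonneg y) c₀
      have n3 : (0:ℝ) ≤ ‖y‖^(s-(n:ℝ)) := Real.rpow_nonneg (norm_nonneg y) _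
      calc C^m * (‖y‖^c₀ * ‖y‖^(e*m) * ‖y‖^(s-(n:ℝ)))
          = (‖y‖^c₀ * (C^m * ‖y‖^(e*m))) * ‖y‖^(s-(n:ℝ)) := by ring
        _ ≤ (‖y‖^c₀ * w y ^ m) * ‖y‖^(s-(n:ℝ)) := by
            have := mul_le_mul_of_nonneg_left hwm n1
            nlinarith
        _ = ‖y‖^c₀ * w y ^ m * ‖y‖^(s-(n:ℝ)) := by ring
    have hone : 1 ≤ ‖y‖^(c₀ + e*m + (s - (n:ℝ))) :=
      Real.one_le_rpow hy1 (by linarith)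
    nlinarith
  have hsub : {y : EuclideanSpace ℝ (Fin n) | R ≤ ‖y‖} ⊆ {y | C^m ≤ f y} :=
    fun y hy => hlow y hy
  have hfin := hI.measure_ge_lt_top hCm
  have hmono : volume {y : EuclideanSpace ℝ (Fin n) | R ≤ ‖y‖} ≤ volume {y | C^m ≤ f y} :=
    measure_mono hsub
  have hcompl : {y : EuclideanSpace ℝ (Fin n) | R ≤ ‖y‖} = (ball (0:EuclideanSpace ℝ (Fin n)) R)ᶜ := by
    ext y; simp [mem_ball_zero_iff, not_lt]
  have htop : volume ((ball (0:EuclideanSpace ℝ (Fin n)) R)ᶜ) = ⊤ := by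
    by_contra hne
    haveI : NoncompactSpace (EuclideanSpace ℝ (Fin n)) := inferInstance
    have huniv : volume (univ : Set (EuclideanSpace ℝ (Fin n))) = ⊤ :=
      MeasureTheory.measure_univ_of_isAddLeftInvariant (volume : Measure (EuclideanSpace ℝ (Fin n)))
    have hle : volume (univ : Set (EuclideanSpace ℝ (Fin n))) ≤
        volume (ball (0:EuclideanSpace ℝ (Fin n)) R) + volume ((ball (0:EuclideanSpace ℝ (Fin n)) R)ᶜ) := by
      rw [← union_compl_self (ball (0:EuclideanSpace ℝ (Fin n)) R)]
      exact measure_union_le _ _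
    rw [huniv] at hle
    have : volume (ball (0:EuclideanSpace ℝ (Fin n)) R) + volume ((ball (0:EuclideanSpace ℝ (Fin n)) R)ᶜ) < ⊤ :=
      ENNReal.add_lt_top.mpr ⟨measure_ball_lt_top, lt_top_iff_ne_top.mpr hne⟩
    exact absurd (hle.trans_lt this) (lt_irrefl _)
  rw [hcompl, htop] at hmono
  exact absurd (le_antisymm le_top hmono ▸ hfin) (by simp)

lemma Rconst_pos {n : ℕ} {s : ℝ} (h0 : 0 < s) (h1 : s < n) : 0 < Rconst n s := by
  unfold Rconst
  have g1 : 0 < Real.Gamma (((n:ℝ) - s)/2) := Real.Gamma_pos_of_pos (by linarith)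
  have g2 : 0 < Real.Gamma (s/2) := Real.Gamma_pos_of_pos (by linarith)
  have g3 : (0:ℝ) < Real.pi ^ ((n:ℝ)/2) := Real.rpow_pos_of_pos Real.pi_pos _
  have g4 : (0:ℝ) < (2:ℝ) ^ s := Real.rpow_pos_of_pos two_pos s
  positivity

lemma master (hn : 1 ≤ n) (γ δ a b p q : ℝ)
    (hγ1 : 0 < γ) (hγ2 : γ < n) (hδ1 : 0 < δ) (hδ2 : δ < n)
    (ha : 0 ≤ a) (hb : 0 ≤ b) (hp : 1 ≤ p) (hq : 1 ≤ q) (hpq : 1 < p*q)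
    (u v : EuclideanSpace ℝ (Fin n) → ℝ) (hu0 : ∀ x, 0 ≤ u x) (hv0 : ∀ x, 0 ≤ v x)
    (hInt1 : ∀ x, Integrable fun y => ‖y‖^a * v y^p * ‖x-y‖^(γ-(n:ℝ)))
    (hInt2 : ∀ x, Integrable fun y => ‖y‖^b * u y^q * ‖x-y‖^(δ-(n:ℝ)))
    (hu : ∀ x, u x = Rconst n γ * ∫ y, ‖y‖^a * v y^p * ‖x-y‖^(γ-(n:ℝ)))
    (hv : ∀ x, v x = Rconst n δ * ∫ y, ‖y‖^b * u y^q * ‖x-y‖^(δ-(n:ℝ)))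
    (hLBu : LB u (γ-(n:ℝ)))
    (hcond : (n:ℝ) - γ < (γ + a + p*(δ+b))/(p*q-1)) : False := by
  have hpq1 : 0 < p*q - 1 := by linarith
  set A := γ + a + p*(δ+b) with hA
  set d := (p*q-1)*(γ-(n:ℝ)) + A with hd
  have hdpos : 0 < d := by
    have := (lt_div_iff₀ hpq1).mp hcond
    rw [hd]; nlinarith
  have hstep : ∀ e : ℝ, LB u e → LB u (γ + a + p*(δ + b + q*e)) := by
    intro e he
    have h1 : LB v (δ + b + q*e) :=
      LB_step hn δ b q (Rconst n δ) hδ2.le hb (by linarith) (Rconst_pos hδ1 hδ2)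
        u v hu0 hInt2 hv he
    exact LB_step hn γ a p (Rconst n γ) hγ2.le ha (by linarith) (Rconst_pos hγ1 hγ2)
        v u hv0 hInt1 hu h1
  have hiter : ∀ k : ℕ, LB u ((γ-(n:ℝ)) + k*d) := by
    intro k
    induction k with
    | zero => simpa using hLBu
    | succ k ih =>
      refine LB_mono (hstep _ ih) ?_
      have hk : (0:ℝ) ≤ (k:ℝ) := Nat.cast_nonneg k
      have hkd : (0:ℝ) ≤ (k:ℝ)*d*(p*q-1) :=
        mul_nonneg (mul_nonneg hk hdpos.le) hpq1.le
      push_cast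
      rw [hd, hA] at *
      nlinarith [hkd]
  obtain ⟨k, hk⟩ := exists_nat_ge ((((n:ℝ) - δ - b)/q - (γ - (n:ℝ)))/d)
  have he := hiter k
  have hq0 : 0 < q := by linarith
  refine LB_absurd hn δ b q hq0 u hu0 (hInt2 0) he ?_
  have h1 : ((n:ℝ) - δ - b)/q - (γ - (n:ℝ)) ≤ (k:ℝ)*d := by
    have := (div_le_iff₀ hdpos).mp hk
    linarith
  have h2 : ((n:ℝ) - δ - b)/q ≤ (γ-(n:ℝ)) + (k:ℝ)*d := by linarith
  have h3 := (div_le_iff₀ hq0).mp h2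
  nlinarith [h3]

end IEAux

/-- Theorem 1.3 (ii)/(iii) in integral form: under the stated exponent conditions,
the integral system (IE) has no nontrivial nonnegative `C¹` solutions. -/
theorem IE_liouville_supercritical_decay (n : ℕ) (hn : 2 ≤ n) (γ δ a b p q : ℝ)
    (hγ1 : 2 ≤ γ) (hγ2 : γ < n) (hδ1 : 2 ≤ δ) (hδ2 : δ < n)
    (ha : 0 ≤ a) (hb : 0 ≤ b) (hp : 1 ≤ p) (hq : 1 ≤ q) (hpq : 1 < p * q)
    (hcond : (γ + a + p * (δ + b)) / (p * q - 1) > (n : ℝ) - γ ∨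
             (δ + b + q * (γ + a)) / (p * q - 1) > (n : ℝ) - δ)
    (u v : EuclideanSpace ℝ (Fin n) → ℝ)
    (huC : ContDiff ℝ 1 u) (hvC : ContDiff ℝ 1 v)
    (hu0 : ∀ x, 0 ≤ u x) (hv0 : ∀ x, 0 ≤ v x)
    (hIE : SolvesIE n γ δ a b p q u v) :
    (∀ x, u x = 0) ∧ (∀ x, v x = 0) := by
  obtain ⟨hInt1, hInt2, hu, hv⟩ := hIE
  have hn1 : 1 ≤ n := by omega
  have hγ0 : 0 < γ := by linarith
  have hδ0 : 0 < δ := by linarith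
  by_cases hvz : ∀ x, v x = 0
  · have huz : ∀ x, u x = 0 := by
      intro x
      rw [hu x]
      have hzero : (fun y : EuclideanSpace ℝ (Fin n) =>
          ‖y‖ ^ a * v y ^ p * ‖x - y‖ ^ (γ - (n : ℝ))) = fun _ => (0:ℝ) := by
        funext y
        rw [hvz y, Real.zero_rpow (by linarith : p ≠ 0)]
        ring
      rw [hzero, integral_zero, mul_zero]
    exact ⟨huz, hvz⟩
  · exfalso
    push_neg at hvz
    obtain ⟨x₁, hx₁⟩ := hvz
    have hvpos : ∃ x, 0 < v x := ⟨x₁, lt_of_le_of_ne (hv0 x₁) (Ne.symm hx₁)⟩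
    have hupos : ∃ x, 0 < u x := by
      by_contra hcon
      push_neg at hcon
      have huz : ∀ x, u x = 0 := fun x => le_antisymm (hcon x) (hu0 x)
      refine hx₁ ?_
      rw [hv x₁]
      have hzero : (fun y : EuclideanSpace ℝ (Fin n) =>
          ‖y‖ ^ b * u y ^ q * ‖x₁ - y‖ ^ (δ - (n : ℝ))) = fun _ => (0:ℝ) := by
        funext y
        rw [huz y, Real.zero_rpow (by linarith : q ≠ 0)]
        ring
      rw [hzero, integral_zero, mul_zero]
    have hLBu : IEAux.LB u (γ - (n:ℝ)) :=
      IEAux.LB_base hn1 γ a p (Rconst n γ) hγ2.le ha (by linarith)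
        (IEAux.Rconst_pos hγ0 hγ2) v u hv0 hvC.continuous hInt1 hu hvpos
    have hLBv : IEAux.LB v (δ - (n:ℝ)) :=
      IEAux.LB_base hn1 δ b q (Rconst n δ) hδ2.le hb (by linarith)
        (IEAux.Rconst_pos hδ0 hδ2) u v hu0 huC.continuous hInt2 hv hupos
    rcases hcond with hc | hc
    · exact IEAux.master hn1 γ δ a b p q hγ0 hγ2 hδ0 hδ2 ha hb hp hq hpq
        u v hu0 hv0 hInt1 hInt2 hu hv hLBu hc
    · have hpq' : 1 < q * p := by rw [mul_comm]; exact hpq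
      have hc' : (n:ℝ) - δ < (δ + b + q * (γ + a)) / (q * p - 1) := by
        rw [mul_comm q p]; exact hc
      exact IEAux.master hn1 δ γ b a q p hδ0 hδ2 hγ0 hγ2 hb ha hq hp hpq'
        v u hv0 hu0 hInt2 hInt1 hv hu hLBv hc'
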